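/- Let q ≥ 3 and let F ⊆ ∂Δ^q be a union of faces of Δ^q containing F_a ∪ F_{a+1} for some a with 0 < a < q−1, where F_i is the i-th face. Then the quotient X = Δ^q / F is not strongly finite: the internal hom Hom(Δ^1, X) has non-degenerate simplices in every degree p > q, hence is of infinite dimension. -/

import Mathlib

open CategoryTheory Simplicial MonoidalCategory SSet Limits

universe u v

/-- A simplex is degenerate if it is the image of a degeneracy map. -/
def SDeg (X : SSet.{u}) : ∀ {n : ℕ}, X _⦋n⦌ → Prop := fun {n} x => match n, x with
  | 0, _ => False
  | n + 1, x => ∃ (i : Fin (n + 1)) (y : X _⦋n⦌), x = X.map (SimplexCategory.σ i).op y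

/-- The `i`-th elementary edge `X(φ(i,i+1))(x)` of a `p`-simplex `x`. -/
def elemEdge (X : SSet.{u}) {p : ℕ} (x : X _⦋p⦌) (i : Fin p) : X _⦋1⦌ :=
  X.map (SimplexCategory.mkOfLe i.castSucc i.succ (Fin.castSucc_lt_succ (i := i)).le).op x

/-- The internal hom of simplicial sets: its `p`-simplices are the
simplicial maps `Δ[p] ⊗ U ⟶ X`. -/
noncomputable def sHom (U X : SSet.{u}) : SSet.{u} where
  obj m := stdSimplex.obj m.unop ⊗ U ⟶ X
  map φ := TypeCat.ofHom fun f => (SSet.stdSimplex.map φ.unop ▷ U) ≫ f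
  map_id m := by
    ext f : 3; simp
    erw [CategoryTheory.Functor.map_id]; simp
  map_comp φ ψ := by
    ext f : 3; simp
    erw [CategoryTheory.Functor.map_comp]; simp

/-- The quotient of a simplicial set `Y` collapsing a simplicial subset
(given by the sets of simplices `S`) to a point. -/
def collapseQuot (Y : SSet.{u}) (S : ∀ m : SimplexCategoryᵒᵖ, Set (Y.obj m))
    (hS : ∀ {m m' : SimplexCategoryᵒᵖ} (φ : m ⟶ m') (x : Y.obj m),
      x ∈ S m → Y.map φ x ∈ S m') : SSet.{u} where
  obj m := Quot (fun x y : Y.obj m => x ∈ S m ∧ y ∈ S m)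
  map φ := TypeCat.ofHom (Quot.map (Y.map φ) (fun x y h => ⟨hS φ x h.1, hS φ y h.2⟩))
  map_id m := by
    ext x
    obtain ⟨x, rfl⟩ := Quot.exists_rep x
    simp [Quot.map, FunctorToTypes.map_id_apply]
  map_comp φ ψ := by
    ext x
    obtain ⟨x, rfl⟩ := Quot.exists_rep x
    simp [Quot.map, FunctorToTypes.map_comp_apply]


/-!
Put `n = p + 2`. The prism `Δ[p+1] ⊗ Δ[1]` is the union of its `p + 2` nondegenerate
`n`-simplices `x_s` (vertices `(0,0), …, (s,0), (s,1), …, (p+1,1)`), and a simplex lies in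
`x_s` exactly when `s` separates its two sheets. On `x_s` use the winding map
`g_s : [n] → [q]` (`wind q a n s`), which squeezes `[0, s)` into `[0, a)`, sends `s ↦ a`,
`s + 1 ↦ a + 1` and stretches `(s + 1, n]` onto `(a + 1, q]`. A simplex lying in two sectors
`s < s'` avoids the vertices `s + 1` and `s'`, so its two images miss the faces `F_{a+1}` and
`F_a` and coincide in `Δ[q]/F`: the `g_s` glue to a `(p+1)`-simplex `f` of `Hom(Δ[1], Δ[q]/F)`.
If `f = s_k y`, then `s_k x_s` is `s_{k+1}`- or `s_k`-degenerate according as `s ≤ k` or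
`s > k`, so the nondegenerate simplex `f(x_s) = [g_s]` forces `g_s` to repeat a value there;
but for each `k` some sector `s` with `g_s` surjective is injective at that spot.
-/

namespace collapseQuot

variable {Y : SSet.{u}} {S : ∀ m : SimplexCategoryᵒᵖ, Set (Y.obj m)}
  {hS : ∀ {m m' : SimplexCategoryᵒᵖ} (φ : m ⟶ m') (x : Y.obj m), x ∈ S m → Y.map φ x ∈ S m'}

lemma mk_eq_mk_iff {m : SimplexCategoryᵒᵖ} {x y : Y.obj m} :
    (Quot.mk _ x : (collapseQuot Y S hS).obj m) = Quot.mk _ y ↔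
      x = y ∨ x ∈ S m ∧ y ∈ S m := by
  refine ⟨fun h => ?_, ?_⟩
  · have hequiv : Equivalence fun x y : Y.obj m => x = y ∨ x ∈ S m ∧ y ∈ S m :=
      { refl _ := .inl rfl
        symm := by rintro _ _ (rfl | h) <;> simp_all
        trans := by rintro _ _ _ (rfl | h) (rfl | h') <;> simp_all }
    exact hequiv.eqvGen_iff.mp ((Quot.eqvGen_exact h).mono fun _ _ => .inr)
  · rintro (rfl | h)
    · rfl
    · exact Quot.sound h

lemma exists_eq_map_of_mk_eq_map {m m' : SimplexCategoryᵒᵖ} {φ : m ⟶ m'} {x : Y.obj m'}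
    {c : (collapseQuot Y S hS).obj m} (h : Quot.mk _ x = (collapseQuot Y S hS).map φ c)
    (hx : x ∉ S m') : ∃ y, x = Y.map φ y := by
  obtain ⟨y, rfl⟩ := Quot.exists_rep c
  rcases mk_eq_mk_iff.mp h with h | h
  · exact ⟨y, h⟩
  · exact absurd h.1 hx

end collapseQuot

def wind (q a n s j : ℕ) : ℕ :=
  if j < s then min j (a - 1)
  else if j = s then min s a
  else if j = s + 1 then max (a + 1) (q + j - n)
  else max (a + 2) (q + j - n)

section wind

variable {q a n s : ℕ}

lemma wind_monotone : Monotone (wind q a n s) := by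
  intro i j hij
  unfold wind
  split_ifs <;> omega

lemma wind_le (hq : a + 2 ≤ q) {j : ℕ} (hj : j ≤ n) : wind q a n s j ≤ q := by
  unfold wind
  split_ifs <;> omega

lemma eq_of_wind_eq (ha : 0 < a) {j : ℕ} (h : wind q a n s j = a) : j = s := by
  unfold wind at h
  split_ifs at h <;> omega

lemma eq_of_wind_eq_add_one {j : ℕ} (h : wind q a n s j = a + 1) : j = s + 1 := by
  unfold wind at h
  split_ifs at h <;> omega

lemma exists_wind_eq (has : a ≤ s) (hsn : s + q ≤ n + a) {v : ℕ} (hv : v ≤ q) :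
    ∃ j ≤ n, wind q a n s j = v := by
  rcases lt_trichotomy v a with h | rfl | h
  · exact ⟨v, by omega, by unfold wind; split_ifs <;> omega⟩
  · exact ⟨s, by omega, by unfold wind; split_ifs <;> omega⟩
  rcases eq_or_lt_of_le (Nat.succ_le_of_lt h) with rfl | h'
  · exact ⟨s + 1, by omega, by unfold wind; split_ifs <;> omega⟩
  · exact ⟨n + v - q, by omega, by unfold wind; split_ifs <;> omega⟩

lemma exists_wind_ne (ha : 0 < a) (hq : a + 2 ≤ q) {p : ℕ} (hqp : q ≤ p) (k : Fin (p + 1)) :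
    ∃ s : Fin (p + 2), a ≤ s ∧ s + q ≤ p + 2 + a ∧
      (s ≤ k.castSucc ∧ wind q a (p + 2) s (k + 1) ≠ wind q a (p + 2) s (k + 2) ∨
        k.castSucc < s ∧ wind q a (p + 2) s k ≠ wind q a (p + 2) s (k + 1)) := by
  have hk := k.is_lt
  by_cases h₁ : k + 1 < a
  · refine ⟨⟨a, by omega⟩, le_rfl, by simp; omega, .inr ⟨Fin.lt_def.2 (by simp; omega), ?_⟩⟩
    simp only [wind]; split_ifs <;> omega
  by_cases h₂ : k + 1 + q ≤ p + 2 + a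
  · refine ⟨⟨k + 1, by omega⟩, by simp; omega, by simp; omega,
      .inr ⟨Fin.lt_def.2 (by simp), ?_⟩⟩
    simp only [wind]; split_ifs <;> omega
  · refine ⟨⟨p + 2 + a - q, by omega⟩, by simp; omega, by simp; omega,
      .inl ⟨Fin.le_def.2 (by simp; omega), ?_⟩⟩
    simp only [wind]; split_ifs <;> omega

end wind

def windHom {q a : ℕ} (hq : a + 2 ≤ q) (n s : ℕ) : Fin (n + 1) →o Fin (q + 1) where
  toFun j := ⟨wind q a n s j, Nat.lt_succ_of_le (wind_le hq (Nat.lt_succ_iff.mp j.is_lt))⟩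
  monotone' _ _ hij := wind_monotone (s := s) hij

lemma windHom_surjective {q a n s : ℕ} (hq : a + 2 ≤ q) (has : a ≤ s) (hsn : s + q ≤ n + a) :
    Function.Surjective (windHom hq n s) := by
  intro v
  obtain ⟨j, hj, hjv⟩ := exists_wind_eq has hsn (Nat.lt_succ_iff.mp v.is_lt)
  exact ⟨⟨j, Nat.lt_succ_of_le hj⟩, Fin.ext hjv⟩

namespace SSet.prodStdSimplex

section sector

variable {N d : ℕ}

def sector (x : (Δ[N] ⊗ Δ[1] : SSet.{u}) _⦋d⦌) : ℕ :=
  Finset.univ.sup fun j => if x.2 j = 0 then (x.1 j : ℕ) else 0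

lemma le_sector {x : (Δ[N] ⊗ Δ[1] : SSet.{u}) _⦋d⦌} {j : Fin (d + 1)} (hj : x.2 j = 0) :
    (x.1 j : ℕ) ≤ sector x := by
  have := Finset.le_sup (f := fun j => if x.2 j = 0 then (x.1 j : ℕ) else 0) (Finset.mem_univ j)
  rwa [if_pos hj] at this

lemma sector_le {x : (Δ[N] ⊗ Δ[1] : SSet.{u}) _⦋d⦌} {j : Fin (d + 1)} (hj : x.2 j ≠ 0) :
    sector x ≤ x.1 j := by
  refine Finset.sup_le fun i _ => ?_
  split_ifs with hi
  · refine stdSimplex.monotone_apply x.1 (le_of_not_gt fun hji => hj ?_)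
    exact nonpos_iff_eq_zero.mp (hi ▸ stdSimplex.monotone_apply x.2 hji.le)
  · exact Nat.zero_le _

lemma orderHomOfSimplex_le_sector_iff (x : (Δ[N] ⊗ Δ[1] : SSet.{u}) _⦋d⦌) (j : Fin (d + 1)) :
    (orderHomOfSimplex x rfl j : ℕ) ≤ sector x ↔ x.2 j = 0 := by
  rw [orderHomOfSimplex_coe]
  by_cases hj : x.2 j = 0
  · simpa [hj] using le_sector hj
  · have hj' : (x.2 j : ℕ) ≠ 0 := fun h => hj (Fin.ext h)
    have := sector_le hj
    simp only [hj, iff_false]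
    omega

end sector

section degeneracy

open SimplexCategory

variable {p : ℕ} {k : Fin (p + 1)} {s : Fin (p + 2)}

lemma whiskerRight_σ_nonDegenerateEquiv₁_of_le (h : s ≤ k.castSucc) :
    (SSet.stdSimplex.map (σ k) ▷ Δ[1]).app _ (nonDegenerateEquiv₁.{u} s).1 =
      (Δ[p] ⊗ Δ[1]).map (σ k.succ).op
        (nonDegenerateEquiv₁
          (s.castPred (Fin.ne_last_of_lt (h.trans_lt k.castSucc_lt_last)))).1 := by
  obtain ⟨s, rfl⟩ := Fin.exists_castSucc_eq.mpr (Fin.ne_last_of_lt (h.trans_lt k.castSucc_lt_last))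
  refine Prod.ext ?_ ?_
  · exact congrArg stdSimplex.objEquiv.symm (σ_comp_σ (Fin.castSucc_le_castSucc_iff.mp h))
  · refine Eq.trans ?_ (stdSimplex.σ_objMk₁_of_le _ _ ?_).symm
    · exact congrArg stdSimplex.objMk₁ (Fin.ext (by simp))
    · simpa using h

lemma whiskerRight_σ_nonDegenerateEquiv₁_of_lt (h : k.castSucc < s) :
    (SSet.stdSimplex.map (σ k) ▷ Δ[1]).app _ (nonDegenerateEquiv₁.{u} s).1 =
      (Δ[p] ⊗ Δ[1]).map (σ k.castSucc).op
        (nonDegenerateEquiv₁ (s.pred (Fin.ne_zero_of_lt h))).1 := by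
  obtain ⟨s, rfl⟩ := Fin.exists_succ_eq.mpr (Fin.ne_zero_of_lt h)
  refine Prod.ext ?_ ?_
  · exact congrArg stdSimplex.objEquiv.symm (σ_comp_σ (Fin.castSucc_lt_succ_iff.mp h)).symm
  · refine Eq.trans ?_ (stdSimplex.σ_objMk₁_of_lt _ _ ?_).symm
    · exact congrArg stdSimplex.objMk₁ (Fin.ext (by simp))
    · simpa using h

end degeneracy

end SSet.prodStdSimplex

def ContainsFace {q : ℕ} (S : ∀ m : SimplexCategoryᵒᵖ, Set ((Δ[q] : SSet.{u}).obj m))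
    (i : ℕ) : Prop :=
  ∀ m x, (∀ j, ((stdSimplex.objEquiv (n := ⦋q⦌) (m := m) x).toOrderHom j : ℕ) ≠ i) → x ∈ S m

section windingMap

open SSet.prodStdSimplex

variable {q a : ℕ} (hq : a + 2 ≤ q) {S : ∀ m : SimplexCategoryᵒᵖ, Set ((Δ[q] : SSet.{u}).obj m)}
  {hS : ∀ {m m' : SimplexCategoryᵒᵖ} (φ : m ⟶ m') (x : Δ[q].obj m), x ∈ S m → Δ[q].map φ x ∈ S m'}

lemma mk_windHom_comp_eq (ha : 0 < a) (hSa : ContainsFace S a) (hSa' : ContainsFace S (a + 1))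
    {d n : ℕ} {ψ : Fin (d + 1) →o Fin (n + 1)} {s s' : ℕ}
    (h : ∀ j, (ψ j : ℕ) ≤ s ↔ (ψ j : ℕ) ≤ s') :
    (Quot.mk _ (stdSimplex.objMk ((windHom hq n s).comp ψ)) : (collapseQuot Δ[q] S hS) _⦋d⦌) =
      Quot.mk _ (stdSimplex.objMk ((windHom hq n s').comp ψ)) := by
  have miss (v : ℕ) (hv : ∀ j, (ψ j : ℕ) ≠ v) :
      stdSimplex.objMk ((windHom hq n v).comp ψ) ∈ S (.op ⦋d⦌) :=
    hSa _ _ fun j hj => hv j (eq_of_wind_eq ha hj)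
  have miss' (v : ℕ) (hv : ∀ j, (ψ j : ℕ) ≠ v + 1) :
      stdSimplex.objMk ((windHom hq n v).comp ψ) ∈ S (.op ⦋d⦌) :=
    hSa' _ _ fun j hj => hv j (eq_of_wind_eq_add_one hj)
  -- if `s < s'`, then `ψ` skips both `s + 1` and `s'`
  rcases lt_trichotomy s s' with hss | rfl | hss
  · exact Quot.sound ⟨miss' s fun j hj => by have := h j; omega,
      miss s' fun j hj => by have := h j; omega⟩
  · rfl
  · exact Quot.sound ⟨miss s fun j hj => by have := h j; omega,
      miss' s' fun j hj => by have := h j; omega⟩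

def windingMap (ha : 0 < a) (hSa : ContainsFace S a) (hSa' : ContainsFace S (a + 1)) (N : ℕ) :
    Δ[N] ⊗ Δ[1] ⟶ collapseQuot Δ[q] S hS where
  app m := TypeCat.ofHom fun x => Quot.mk _ (stdSimplex.objMk
    ((windHom hq (N + 1) (sector (d := m.unop.len) x)).comp (orderHomOfSimplex x rfl)))
  naturality m m' φ := by
    ext x
    exact mk_windHom_comp_eq hq ha hSa hSa' fun j =>
      (orderHomOfSimplex_le_sector_iff _ j).trans (orderHomOfSimplex_le_sector_iff x _).symm

lemma windingMap_app_nonDegenerateEquiv₁ (ha : 0 < a) (hSa : ContainsFace S a)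
    (hSa' : ContainsFace S (a + 1)) {N : ℕ} (s : Fin (N + 1)) :
    (windingMap hq (hS := hS) ha hSa hSa' N).app _ (nonDegenerateEquiv₁ s).1 =
      Quot.mk _ (stdSimplex.objMk (windHom hq (N + 1) s)) := by
  set x := nonDegenerateEquiv₁.{u} s
  have hψ : orderHomOfSimplex x.1 rfl = .id := (nonDegenerate_max_dim_iff _ rfl).mp x.2
  show Quot.mk _ (stdSimplex.objMk (m := .op ⦋N + 1⦌)
    ((windHom hq (N + 1) (sector x.1)).comp (orderHomOfSimplex x.1 rfl))) = _
  rw [hψ]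
  refine mk_windHom_comp_eq hq ha hSa hSa' fun j => ?_
  have hj := orderHomOfSimplex_le_sector_iff x.1 j
  rw [hψ] at hj
  rw [hj, show x.1.2 = stdSimplex.objMk₁ s.succ.castSucc from rfl,
    stdSimplex.objMk₁_apply_eq_zero_iff]
  simp [Fin.lt_def]

lemma wind_eq_of_windingMap_eq_σ (ha : 0 < a) (hSa : ContainsFace S a)
    (hSa' : ContainsFace S (a + 1)) {p : ℕ} {k : Fin (p + 1)}
    {y : (sHom Δ[1] (collapseQuot Δ[q] S hS)) _⦋p⦌}
    (hy : windingMap hq ha hSa hSa' (p + 1) =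
      (sHom Δ[1] (collapseQuot Δ[q] S hS)).map (SimplexCategory.σ k).op y)
    {s : Fin (p + 2)} (hs : stdSimplex.objMk (windHom hq (p + 2) s) ∉ S (.op ⦋p + 2⦌))
    {j : Fin (p + 2)} {z : (Δ[p] ⊗ Δ[1] : SSet.{u}) _⦋p + 1⦌}
    (hz : (SSet.stdSimplex.map (SimplexCategory.σ k) ▷ Δ[1]).app _ (nonDegenerateEquiv₁ s).1 =
      (Δ[p] ⊗ Δ[1]).map (SimplexCategory.σ j).op z) :
    wind q a (p + 2) s j = wind q a (p + 2) s (j + 1) := by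
  have hx := windingMap_app_nonDegenerateEquiv₁ hq (hS := hS) ha hSa hSa' s
  have hx' : (windingMap hq ha hSa hSa' (p + 1)).app _ (nonDegenerateEquiv₁ s).1 =
      (collapseQuot Δ[q] S hS).map (SimplexCategory.σ j).op (y.app _ z) := by
    rw [hy]
    exact (congrArg (y.app _) hz).trans (NatTrans.naturality_apply y _ z)
  obtain ⟨w, hw⟩ := collapseQuot.exists_eq_map_of_mk_eq_map (hx.symm.trans hx') hs
  calc wind q a (p + 2) s j = (Δ[q].map (SimplexCategory.σ j).op w j.castSucc : ℕ) :=
        congrArg Fin.val (DFunLike.congr_fun hw j.castSucc)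
    _ = (Δ[q].map (SimplexCategory.σ j).op w j.succ : ℕ) := by
        show (w (j.predAbove j.castSucc) : ℕ) = w (j.predAbove j.succ)
        simp
    _ = wind q a (p + 2) s (j + 1) := (congrArg Fin.val (DFunLike.congr_fun hw j.succ)).symm

end windingMap

/-- If `q ≥ 3` and `F ⊆ ∂Δ[q]` is a union of the faces `F_i`, `i ∈ T`, containing
`F_a ∪ F_{a+1}` with `0 < a < q - 1`, then `Hom(Δ[1], Δ[q]/F)` has non-degenerate
simplices in every degree `> q`, hence `Δ[q]/F` is not strongly finite. -/
theorem stmt_19 (q a : ℕ) (ha : 0 < a) (ha' : a < q - 1)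
    (T : Set (Fin (q + 1)))
    (haT : (⟨a, by omega⟩ : Fin (q + 1)) ∈ T) (haT' : (⟨a + 1, by omega⟩ : Fin (q + 1)) ∈ T)
    (S : ∀ m : SimplexCategoryᵒᵖ, Set ((stdSimplex.{u}.obj ⦋q⦌).obj m))
    (hSdef : ∀ (m : SimplexCategoryᵒᵖ) (x : (stdSimplex.{u}.obj ⦋q⦌).obj m),
      x ∈ S m ↔ ∃ i ∈ T, ∀ j, (stdSimplex.objEquiv (n := ⦋q⦌) (m := m) x).toOrderHom j ≠ i)
    (hS : ∀ {m m' : SimplexCategoryᵒᵖ} (φ : m ⟶ m')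
      (x : (stdSimplex.{u}.obj ⦋q⦌).obj m),
      x ∈ S m → (stdSimplex.{u}.obj ⦋q⦌).map φ x ∈ S m') :
    ∀ p : ℕ, q < p + 1 →
      ∃ f : (sHom (stdSimplex.{u}.obj ⦋1⦌)
          (collapseQuot (stdSimplex.{u}.obj ⦋q⦌) S hS)) _⦋p + 1⦌,
        ¬ SDeg (sHom (stdSimplex.{u}.obj ⦋1⦌)
            (collapseQuot (stdSimplex.{u}.obj ⦋q⦌) S hS)) f := by
  intro p hp
  have hq : a + 2 ≤ q := by omega
  have hSa : ContainsFace S a := fun m x hx =>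
    (hSdef m x).2 ⟨_, haT, fun j h => hx j (congrArg Fin.val h)⟩
  have hSa' : ContainsFace S (a + 1) := fun m x hx =>
    (hSdef m x).2 ⟨_, haT', fun j h => hx j (congrArg Fin.val h)⟩
  refine ⟨windingMap hq ha hSa hSa' (p + 1), ?_⟩
  rintro ⟨k, y, hy⟩
  obtain ⟨s, has, hsq, hs⟩ := exists_wind_ne ha hq (by omega : q ≤ p) k
  have hs_notMem : stdSimplex.objMk (windHom hq (p + 2) s) ∉ S (.op ⦋p + 2⦌) := fun h => by
    obtain ⟨i, -, hi⟩ := (hSdef _ _).1 h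
    obtain ⟨j, rfl⟩ := windHom_surjective hq has (by omega) i
    exact hi j rfl
  rcases hs with ⟨hle, hne⟩ | ⟨hlt, hne⟩
  · exact hne (wind_eq_of_windingMap_eq_σ hq ha hSa hSa' hy hs_notMem
      (prodStdSimplex.whiskerRight_σ_nonDegenerateEquiv₁_of_le hle))
  · exact hne (wind_eq_of_windingMap_eq_σ hq ha hSa hSa' hy hs_notMem
      (prodStdSimplex.whiskerRight_σ_nonDegenerateEquiv₁_of_lt hlt))
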